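/- Let F ∈ ℝ^{3×3} with singular value decomposition F = U S Vᵀ where U, V ∈ SO(3) and S = diag(s₁, s₂, s₃). Define R_i(θ) = exp(θ (U eᵢ)^∧) U Vᵀ for i ∈ {1,2,3}. Then tr(Fᵀ R_i(θ)) = s_i + (s_j + s_k) cos θ, where (i,j,k) is a cyclic permutation of (1,2,3). -/

import Mathlib

open Matrix Real

/-- The hat map: `hat x` is the skew-symmetric matrix with `(hat x) y = x × y`. -/
noncomputable def hat (x : Fin 3 → ℝ) : Matrix (Fin 3) (Fin 3) ℝ :=
  !![0, -x 2, x 1; x 2, 0, -x 0; -x 1, x 0, 0]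

/-!
Conjugation by `U ∈ SO(3)` turns `exp(θ (U eᵢ)^∧)` into `U exp(θ êᵢ) Uᵀ`, and since `êᵢ³ = -êᵢ`
the exponential series collapses to Rodrigues' formula `1 + sin θ • êᵢ + (1 - cos θ) • êᵢ²`.
The orthogonal factors cancel under the trace, leaving `tr(S (1 + sin θ • êᵢ + (1 - cos θ) • êᵢ²))`;
here `êᵢ` has zero diagonal and `êᵢ² = eᵢ eᵢᵀ - 1`.
-/

theorem Fin.sum_univ_three_cyclic {M : Type*} [AddCommMonoid M] (f : Fin 3 → M) (i : Fin 3) :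
    ∑ j, f j = f i + f (i + 1) + f (i + 2) := by
  rw [← Equiv.sum_comp (Equiv.addLeft i), Fin.sum_univ_three]
  simp

theorem Matrix.adjugate_eq_transpose {n R : Type*} [Fintype n] [DecidableEq n] [CommRing R]
    {A : Matrix n n R} (hA : Aᵀ * A = 1) (hdet : A.det = 1) : A.adjugate = Aᵀ := by
  rw [← inv_eq_left_inv hA, inv_def, hdet, Ring.inverse_one, one_smul]

section Rodrigues

variable {A : Type*} [Ring A] [Algebra ℝ A] {J : A}

theorem pow_two_mul_add_one_of_pow_three_eq_neg (hJ : J ^ 3 = -J) (k : ℕ) :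
    J ^ (2 * k + 1) = ((-1 : ℝ) ^ k) • J := by
  induction k with
  | zero => simp
  | succ k ih =>
    calc J ^ (2 * (k + 1) + 1) = J ^ (2 * k + 1) * J ^ 2 := by rw [← pow_add]; ring_nf
      _ = ((-1 : ℝ) ^ k) • J ^ 3 := by rw [ih, smul_mul_assoc, ← pow_succ']
      _ = ((-1 : ℝ) ^ (k + 1)) • J := by rw [hJ, pow_succ, mul_neg_one, neg_smul, smul_neg]

theorem pow_two_mul_add_two_of_pow_three_eq_neg (hJ : J ^ 3 = -J) (k : ℕ) :
    J ^ (2 * k + 2) = ((-1 : ℝ) ^ k) • J ^ 2 := by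
  rw [pow_succ, pow_two_mul_add_one_of_pow_three_eq_neg hJ, smul_mul_assoc, ← pow_two]

variable [TopologicalSpace A] [ContinuousSMul ℝ A]

theorem hasSum_exp_series_odd_of_pow_three_eq_neg (hJ : J ^ 3 = -J) (θ : ℝ) :
    HasSum (fun k : ℕ => ((2 * k + 1).factorial : ℝ)⁻¹ • (θ • J) ^ (2 * k + 1))
      (sin θ • J) := by
  convert (hasSum_sin θ).smul_const J using 2 with k
  rw [smul_pow, pow_two_mul_add_one_of_pow_three_eq_neg hJ, smul_smul, smul_smul]
  congr 1
  ring

theorem hasSum_exp_series_even_of_pow_three_eq_neg [IsTopologicalAddGroup A] (hJ : J ^ 3 = -J) (θ : ℝ) :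
    HasSum (fun k : ℕ => ((2 * k).factorial : ℝ)⁻¹ • (θ • J) ^ (2 * k))
      (1 + (1 - cos θ) • J ^ 2) := by
  have hcos := ((hasSum_nat_add_iff' 1).mpr (hasSum_cos θ)).neg.smul_const (J ^ 2)
  have hterm : ∀ k : ℕ, ((2 * (k + 1)).factorial : ℝ)⁻¹ • (θ • J) ^ (2 * (k + 1)) =
      (-((-1) ^ (k + 1) * θ ^ (2 * (k + 1)) / (2 * (k + 1)).factorial)) • J ^ 2 := by
    intro k
    rw [smul_pow, show 2 * (k + 1) = 2 * k + 2 by ring,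
      pow_two_mul_add_two_of_pow_three_eq_neg hJ, smul_smul, smul_smul]
    congr 1
    ring
  have htail : HasSum (fun k : ℕ => ((2 * (k + 1)).factorial : ℝ)⁻¹ • (θ • J) ^ (2 * (k + 1)))
      ((1 - cos θ) • J ^ 2) := by
    simp only [hterm]
    convert hcos using 1
    simp [sub_smul]
  simpa [add_comm] using
    (hasSum_nat_add_iff (f := fun k : ℕ ↦ ((2 * k).factorial : ℝ)⁻¹ • (θ • J) ^ (2 * k)) 1).mp htail

/-- Rodrigues' formula. -/
theorem exp_smul_eq_of_pow_three_eq_neg [IsTopologicalRing A] [T2Space A] (hJ : J ^ 3 = -J) (θ : ℝ) :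
    NormedSpace.exp (θ • J) = 1 + sin θ • J + (1 - cos θ) • J ^ 2 := by
  have h := HasSum.even_add_odd (f := fun n ↦ (n.factorial : ℝ)⁻¹ • (θ • J) ^ n)
    (hasSum_exp_series_even_of_pow_three_eq_neg hJ θ)
    (hasSum_exp_series_odd_of_pow_three_eq_neg hJ θ)
  rw [congrFun (NormedSpace.exp_eq_tsum ℝ (𝔸 := A)), h.tsum_eq]
  abel

end Rodrigues

theorem hat_pow_three (x : Fin 3 → ℝ) : hat x ^ 3 = -(x ⬝ᵥ x) • hat x := by
  ext a b
  fin_cases a <;> fin_cases b <;>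
    simp [hat, pow_succ, Matrix.mul_apply, Fin.sum_univ_three, dotProduct] <;> ring

theorem mul_hat_mul_transpose (A : Matrix (Fin 3) (Fin 3) ℝ) (x : Fin 3 → ℝ) :
    A * hat x * Aᵀ = hat (A.adjugateᵀ *ᵥ x) := by
  rw [adjugate_fin_three]
  ext a b
  fin_cases a <;> fin_cases b <;>
    simp [hat, Matrix.mul_apply, Matrix.mulVec, dotProduct, Fin.sum_univ_three] <;> ring

theorem mul_hat_mul_transpose_of_det_eq_one {U : Matrix (Fin 3) (Fin 3) ℝ} (hU : Uᵀ * U = 1)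
    (hdet : U.det = 1) (x : Fin 3 → ℝ) : U * hat x * Uᵀ = hat (U *ᵥ x) := by
  rw [mul_hat_mul_transpose, adjugate_eq_transpose hU hdet, transpose_transpose]

theorem exp_smul_hat_mulVec {U : Matrix (Fin 3) (Fin 3) ℝ} (hU : Uᵀ * U = 1) (hdet : U.det = 1)
    (θ : ℝ) (x : Fin 3 → ℝ) :
    NormedSpace.exp (θ • hat (U *ᵥ x)) = U * NormedSpace.exp (θ • hat x) * Uᵀ := by
  have hinv : U⁻¹ = Uᵀ := inv_eq_left_inv hU
  have hconj : θ • hat (U *ᵥ x) = U * (θ • hat x) * U⁻¹ := by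
    rw [hinv, ← mul_hat_mul_transpose_of_det_eq_one hU hdet, Matrix.mul_smul, Matrix.smul_mul]
  rw [hconj, exp_conj _ _ (IsUnit.of_mul_eq_one _ (mul_eq_one_comm.mp hU)), hinv]

theorem trace_transpose_mul_conj {n R : Type*} [Fintype n] [DecidableEq n] [CommRing R]
    {U V : Matrix n n R} (hU : Uᵀ * U = 1) (hV : Vᵀ * V = 1) (D M : Matrix n n R) :
    trace ((U * D * Vᵀ)ᵀ * (U * M * Uᵀ * (U * Vᵀ))) = trace (Dᵀ * M) := by
  have hU' : ∀ X : Matrix n n R, Uᵀ * (U * X) = X := fun X ↦ by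
    rw [← Matrix.mul_assoc, hU, Matrix.one_mul]
  simp only [transpose_mul, transpose_transpose, Matrix.mul_assoc, hU']
  rw [trace_mul_comm]
  simp only [Matrix.mul_assoc, hV, Matrix.mul_one]

theorem trace_diagonal_mul_hat (s x : Fin 3 → ℝ) : trace (diagonal s * hat x) = 0 := by
  simp [trace, hat, Fin.sum_univ_three]

theorem trace_diagonal_mul_hat_single_sq (s : Fin 3 → ℝ) (i : Fin 3) :
    trace (diagonal s * hat (Pi.single i 1) ^ 2) = -(s (i + 1) + s (i + 2)) := by
  fin_cases i <;> simp [trace, hat, pow_two, Matrix.mul_apply, Fin.sum_univ_three] <;> ring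

/-- For `F = U S Vᵀ` with `U, V ∈ SO(3)` and `S = diag s`, and
`Rᵢ(θ) = exp(θ (U eᵢ)^∧) U Vᵀ`, one has
`tr(Fᵀ Rᵢ(θ)) = sᵢ + (sⱼ + sₖ) cos θ` for `(i,j,k)` a cyclic permutation of `(1,2,3)`. -/
theorem trace_along_sigma_curve (U V : Matrix (Fin 3) (Fin 3) ℝ)
    (hU : Uᵀ * U = 1 ∧ U.det = 1) (hV : Vᵀ * V = 1 ∧ V.det = 1)
    (s : Fin 3 → ℝ) (θ : ℝ) (i : Fin 3) :
    Matrix.trace ((U * Matrix.diagonal s * Vᵀ)ᵀ *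
        (NormedSpace.exp (θ • hat (U.mulVec (Pi.single i 1))) * (U * Vᵀ))) =
      s i + (s (i + 1) + s (i + 2)) * Real.cos θ := by
  have hJ : hat (Pi.single i 1) ^ 3 = -hat (Pi.single i 1) := by
    simpa using hat_pow_three (Pi.single i 1)
  rw [exp_smul_hat_mulVec hU.1 hU.2, exp_smul_eq_of_pow_three_eq_neg hJ,
    trace_transpose_mul_conj hU.1 hV.1, diagonal_transpose]
  simp only [Matrix.mul_add, Matrix.mul_one, Matrix.mul_smul, trace_add, trace_smul,
    trace_diagonal, trace_diagonal_mul_hat, trace_diagonal_mul_hat_single_sq,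
    Fin.sum_univ_three_cyclic s i, smul_eq_mul]
  ring
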